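/- Fix k ∈ ℝ with k ≠ 0. Let h : ℝ² → ℝ be C³, let A : ℝ² → ℝ² be an invertible linear map, and let x ∈ ℝ² satisfy K₂(h)(A x) ≠ 0 and h(A x) ≠ 0. Then for every X ∈ ℝ²: λ(h ∘ A)(x)(X) = λ(h)(A x)(A X), where λ(h)(x)(X) = (K₃(h)(x)/(3·K₂(h)(x))) · ρ_x(X)/(k·h(x)). -/

import Mathlib

/-!
Up to the factors `1/2` and `1/6`, `K₂(h)(y)` and `K₃(h)(y)` are the second and third derivatives
of `h` at `y` along the skew gradient `v_h(y) = (h₂, −h₁)`, the vector with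
`det(v_h(y), w) = Dh(y) w`. For `g = h ∘ A` the chain rule gives `A v_g(x) = det A · v_h(Ax)`,
so `K₂` and `K₃` transform with the factors `(det A)²` and `(det A)³`, while
`ρ_{Ax}(AX) = det A · ρ_x(X)`; these powers cancel in `λ`.
-/

/-- First partial derivative of `h : ℝ² → ℝ` in the `i`-th coordinate direction. -/
noncomputable def pd1 (h : (Fin 2 → ℝ) → ℝ) (i : Fin 2) (x : Fin 2 → ℝ) : ℝ :=
  fderiv ℝ h x (Pi.single i 1)

/-- Second partial derivative of `h : ℝ² → ℝ`. -/
noncomputable def pd2 (h : (Fin 2 → ℝ) → ℝ) (i j : Fin 2) (x : Fin 2 → ℝ) : ℝ :=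
  iteratedFDeriv ℝ 2 h x ![Pi.single i 1, Pi.single j 1]

/-- Third partial derivative of `h : ℝ² → ℝ`. -/
noncomputable def pd3 (h : (Fin 2 → ℝ) → ℝ) (i j m : Fin 2) (x : Fin 2 → ℝ) : ℝ :=
  iteratedFDeriv ℝ 3 h x ![Pi.single i 1, Pi.single j 1, Pi.single m 1]

/-- `K₂(h) = (1/2)(h₁₁h₂² − 2h₁₂h₁h₂ + h₂₂h₁²)`. -/
noncomputable def K2 (h : (Fin 2 → ℝ) → ℝ) (x : Fin 2 → ℝ) : ℝ :=
  (1 / 2) * (pd2 h 0 0 x * (pd1 h 1 x) ^ 2 - 2 * pd2 h 0 1 x * pd1 h 0 x * pd1 h 1 x +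
    pd2 h 1 1 x * (pd1 h 0 x) ^ 2)

/-- `K₃(h) = (1/6)(h₁₁₁h₂³ − 3h₁₁₂h₂²h₁ + 3h₁₂₂h₂h₁² − h₂₂₂h₁³)`. -/
noncomputable def K3 (h : (Fin 2 → ℝ) → ℝ) (x : Fin 2 → ℝ) : ℝ :=
  (1 / 6) * (pd3 h 0 0 0 x * (pd1 h 1 x) ^ 3 -
    3 * pd3 h 0 0 1 x * (pd1 h 1 x) ^ 2 * pd1 h 0 x +
    3 * pd3 h 0 1 1 x * pd1 h 1 x * (pd1 h 0 x) ^ 2 -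
    pd3 h 1 1 1 x * (pd1 h 0 x) ^ 3)

/-- The paper's invariant 1-form `λ(h)(x)(X) = (K₃(h)(x)/(3K₂(h)(x))) · ρ_x(X)/(k·h(x))`,
where `ρ_x(X) = x₂X₁ − x₁X₂`. -/
noncomputable def lam (k : ℝ) (h : (Fin 2 → ℝ) → ℝ) (x X : Fin 2 → ℝ) : ℝ :=
  (K3 h x / (3 * K2 h x)) * (x 1 * X 0 - x 0 * X 1) / (k * h x)

section
variable {E F : Type*} [NormedAddCommGroup E] [NormedSpace ℝ E]
  [NormedAddCommGroup F] [NormedSpace ℝ F]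

lemma fderiv_clm_apply_const {g : E → E →L[ℝ] F} {z : E} (hg : DifferentiableAt ℝ g z) (u v : E) :
    fderiv ℝ (fun y => g y v) z u = fderiv ℝ g z u v := by
  rw [fderiv_clm_apply hg (differentiableAt_const v)]; simp

lemma iteratedFDeriv_three_apply (f : E → F) (z : E) (m : Fin 3 → E) :
    iteratedFDeriv ℝ 3 f z m = fderiv ℝ (fderiv ℝ (fderiv ℝ f)) z (m 0) (m 1) (m 2) := by
  rw [iteratedFDeriv_succ_apply_right, iteratedFDeriv_two_apply]; rfl

lemma ContDiff.fderiv_fderiv_swap {f : E → F} (hf : ContDiff ℝ 2 f) (z u v : E) :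
    fderiv ℝ (fderiv ℝ f) z u v = fderiv ℝ (fderiv ℝ f) z v u :=
  hf.contDiffAt.isSymmSndFDerivAt (by simp [minSmoothness_of_isRCLikeNormedField]) u v

lemma ContDiff.fderiv_fderiv_fderiv_swap₁₂ {f : E → F} (hf : ContDiff ℝ 3 f) (z u v w : E) :
    fderiv ℝ (fderiv ℝ (fderiv ℝ f)) z u v w = fderiv ℝ (fderiv ℝ (fderiv ℝ f)) z v u w :=
  congrArg (· w) ((hf.fderiv_right (m := 2) le_rfl).fderiv_fderiv_swap z u v)

lemma ContDiff.fderiv_fderiv_fderiv_swap₂₃ {f : E → F} (hf : ContDiff ℝ 3 f) (z u v w : E) :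
    fderiv ℝ (fderiv ℝ (fderiv ℝ f)) z u v w = fderiv ℝ (fderiv ℝ (fderiv ℝ f)) z u w v := by
  have hd : Differentiable ℝ (fderiv ℝ (fderiv ℝ f)) :=
    ((hf.fderiv_right (m := 2) le_rfl).fderiv_right (m := 1) le_rfl).differentiable one_ne_zero
  have hd' (v : E) : Differentiable ℝ (fun y => fderiv ℝ (fderiv ℝ f) y v) :=
    fun y => (hd y).clm_apply (differentiableAt_const v)
  have hsymm : (fun y => fderiv ℝ (fderiv ℝ f) y v w) = fun y => fderiv ℝ (fderiv ℝ f) y w v :=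
    funext fun y => (hf.of_le (by norm_num)).fderiv_fderiv_swap y v w
  rw [← fderiv_clm_apply_const (hd z), ← fderiv_clm_apply_const (hd' v z), hsymm,
    fderiv_clm_apply_const (hd' w z), fderiv_clm_apply_const (hd z)]

lemma iteratedFDeriv_comp_linearMap_apply_const {G : Type*} [NormedAddCommGroup G]
    [NormedSpace ℝ G] [FiniteDimensional ℝ G] {f : E → F} {n : WithTop ℕ∞}
    (hf : ContDiff ℝ n f) (A : G →ₗ[ℝ] E) {i : ℕ} (hi : i ≤ n) (x v : G) :
    iteratedFDeriv ℝ i (fun y => f (A y)) x (fun _ => v) =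
      iteratedFDeriv ℝ i f (A x) (fun _ => A v) :=
  congrArg (· fun _ => v) ((LinearMap.toContinuousLinearMap A).iteratedFDeriv_comp_right hf x hi)

end

noncomputable def skewGrad (h : (Fin 2 → ℝ) → ℝ) (y : Fin 2 → ℝ) : Fin 2 → ℝ :=
  pd1 h 1 y • Pi.single 0 1 - pd1 h 0 y • Pi.single 1 1

lemma K2_eq_iteratedFDeriv_skewGrad {h : (Fin 2 → ℝ) → ℝ} (hh : ContDiff ℝ 2 h) (y : Fin 2 → ℝ) :
    K2 h y = 1 / 2 * iteratedFDeriv ℝ 2 h y (fun _ => skewGrad h y) := by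
  simp only [K2, pd2, iteratedFDeriv_two_apply, skewGrad, map_sub, map_smul,
    sub_apply, FunLike.coe_smul, Pi.smul_apply, smul_eq_mul,
    Matrix.cons_val_zero, Matrix.cons_val_one, hh.fderiv_fderiv_swap y (Pi.single 1 1)]
  ring

lemma K3_eq_iteratedFDeriv_skewGrad {h : (Fin 2 → ℝ) → ℝ} (hh : ContDiff ℝ 3 h) (y : Fin 2 → ℝ) :
    K3 h y = 1 / 6 * iteratedFDeriv ℝ 3 h y (fun _ => skewGrad h y) := by
  have s12 := hh.fderiv_fderiv_fderiv_swap₁₂ y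
  have s23 := hh.fderiv_fderiv_fderiv_swap₂₃ y
  simp only [K3, pd3, iteratedFDeriv_three_apply, skewGrad, map_sub, map_smul,
    sub_apply, FunLike.coe_smul, Pi.smul_apply, smul_eq_mul,
    Matrix.cons_val_zero, Matrix.cons_val_one, Matrix.cons_val_two, Matrix.tail_cons,
    Matrix.head_cons,
    s12 (Pi.single 1 1) (Pi.single 0 1), s23 (Pi.single 0 1) (Pi.single 1 1) (Pi.single 0 1),
    s23 (Pi.single 1 1) (Pi.single 1 1) (Pi.single 0 1)]
  ring

lemma fderiv_apply_eq_pd1 (h : (Fin 2 → ℝ) → ℝ) (y w : Fin 2 → ℝ) :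
    fderiv ℝ h y w = w 0 * pd1 h 0 y + w 1 * pd1 h 1 y := by
  have hw : w = w 0 • Pi.single 0 1 + w 1 • Pi.single 1 1 := by
    ext i; fin_cases i <;> simp
  conv_lhs => rw [hw]
  simp [pd1]

lemma pd1_comp_linearMap {h : (Fin 2 → ℝ) → ℝ} (A : (Fin 2 → ℝ) →ₗ[ℝ] (Fin 2 → ℝ))
    {x : Fin 2 → ℝ} (hh : DifferentiableAt ℝ h (A x)) (j : Fin 2) :
    pd1 (fun y => h (A y)) j x = fderiv ℝ h (A x) (A (Pi.single j 1)) := by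
  have hA := (LinearMap.toContinuousLinearMap A).hasFDerivAt (x := x)
  exact congrArg (· (Pi.single j 1)) (hh.hasFDerivAt.comp x hA).fderiv

lemma map_skewGrad_comp_linearMap {h : (Fin 2 → ℝ) → ℝ} (A : (Fin 2 → ℝ) →ₗ[ℝ] (Fin 2 → ℝ))
    {x : Fin 2 → ℝ} (hh : DifferentiableAt ℝ h (A x)) :
    A (skewGrad (fun y => h (A y)) x) = LinearMap.det A • skewGrad h (A x) := by
  simp only [skewGrad, pd1_comp_linearMap A hh, fderiv_apply_eq_pd1, ← LinearMap.det_toMatrix',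
    Matrix.det_fin_two]
  simp only [← LinearMap.toMatrix'_mulVec A]
  ext i; fin_cases i <;> simp [Matrix.mulVec, dotProduct, Fin.sum_univ_two] <;> ring

lemma map_cross_eq_det_mul (A : (Fin 2 → ℝ) →ₗ[ℝ] (Fin 2 → ℝ)) (u w : Fin 2 → ℝ) :
    A u 1 * A w 0 - A u 0 * A w 1 = LinearMap.det A * (u 1 * w 0 - u 0 * w 1) := by
  simp only [← LinearMap.det_toMatrix', ← LinearMap.toMatrix'_mulVec A, Matrix.det_fin_two,
    Matrix.mulVec, dotProduct, Fin.sum_univ_two]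
  ring

lemma iteratedFDeriv_comp_linearMap_skewGrad {h : (Fin 2 → ℝ) → ℝ} {i : ℕ}
    (hh : ContDiff ℝ i h) (hi : i ≠ 0) (A : (Fin 2 → ℝ) →ₗ[ℝ] (Fin 2 → ℝ)) (x : Fin 2 → ℝ) :
    iteratedFDeriv ℝ i (fun y => h (A y)) x (fun _ => skewGrad (fun y => h (A y)) x) =
      LinearMap.det A ^ i * iteratedFDeriv ℝ i h (A x) (fun _ => skewGrad h (A x)) := by
  rw [iteratedFDeriv_comp_linearMap_apply_const hh A le_rfl,
    map_skewGrad_comp_linearMap A (hh.differentiable (by exact_mod_cast hi) _),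
    ContinuousMultilinearMap.map_smul_univ (iteratedFDeriv ℝ i h (A x)) (fun _ => LinearMap.det A)
      (fun _ => skewGrad h (A x))]
  simp

lemma K2_comp_linearMap {h : (Fin 2 → ℝ) → ℝ} (hh : ContDiff ℝ 2 h)
    (A : (Fin 2 → ℝ) →ₗ[ℝ] (Fin 2 → ℝ)) (x : Fin 2 → ℝ) :
    K2 (fun y => h (A y)) x = LinearMap.det A ^ 2 * K2 h (A x) := by
  have hhA : ContDiff ℝ 2 (fun y => h (A y)) :=
    hh.comp (LinearMap.toContinuousLinearMap A).contDiff
  rw [K2_eq_iteratedFDeriv_skewGrad hhA,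
    iteratedFDeriv_comp_linearMap_skewGrad hh two_ne_zero, K2_eq_iteratedFDeriv_skewGrad hh]
  ring

lemma K3_comp_linearMap {h : (Fin 2 → ℝ) → ℝ} (hh : ContDiff ℝ 3 h)
    (A : (Fin 2 → ℝ) →ₗ[ℝ] (Fin 2 → ℝ)) (x : Fin 2 → ℝ) :
    K3 (fun y => h (A y)) x = LinearMap.det A ^ 3 * K3 h (A x) := by
  have hhA : ContDiff ℝ 3 (fun y => h (A y)) :=
    hh.comp (LinearMap.toContinuousLinearMap A).contDiff
  rw [K3_eq_iteratedFDeriv_skewGrad hhA,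
    iteratedFDeriv_comp_linearMap_skewGrad hh three_ne_zero, K3_eq_iteratedFDeriv_skewGrad hh]
  ring

lemma lam_eq_of_covariant (k : ℝ) {g h : (Fin 2 → ℝ) → ℝ} {x y X Y : Fin 2 → ℝ} {δ : ℝ}
    (hK2 : K2 g x = δ ^ 2 * K2 h y) (hK3 : K3 g x = δ ^ 3 * K3 h y)
    (hρ : y 1 * Y 0 - y 0 * Y 1 = δ * (x 1 * X 0 - x 0 * X 1)) (hgh : g x = h y) :
    lam k g x X = lam k h y Y := by
  rw [lam, lam, hK2, hK3, hρ, hgh]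
  -- if `δ = 0` or `K2 h y = 0`, both sides vanish since `a / 0 = 0`
  rcases eq_or_ne δ 0 with rfl | hδ
  · simp
  rcases eq_or_ne (K2 h y) 0 with hK | hK
  · simp [hK]
  field_simp

theorem lam_invariance_general (k : ℝ) (h : (Fin 2 → ℝ) → ℝ) (hh : ContDiff ℝ 3 h)
    (A : (Fin 2 → ℝ) →ₗ[ℝ] (Fin 2 → ℝ))
    (x : Fin 2 → ℝ) (X : Fin 2 → ℝ) :
    lam k (fun y => h (A y)) x X = lam k h (A x) (A X) :=
  lam_eq_of_covariant k (K2_comp_linearMap (hh.of_le (by norm_num)) A x)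
    (K3_comp_linearMap hh A x) (map_cross_eq_det_mul A x X) rfl

/-- Invariance of the 1-form `λ = (1/3)(K₃/K₂)·ρ/(ku)` under linear changes of variables:
`λ(h∘A)(x)(X) = λ(h)(Ax)(AX)`. -/
theorem lam_invariance (k : ℝ) (hk : k ≠ 0) (h : (Fin 2 → ℝ) → ℝ) (hh : ContDiff ℝ 3 h)
    (A : (Fin 2 → ℝ) →ₗ[ℝ] (Fin 2 → ℝ)) (hA : LinearMap.det A ≠ 0)
    (x : Fin 2 → ℝ) (hx2 : K2 h (A x) ≠ 0) (hxh : h (A x) ≠ 0) (X : Fin 2 → ℝ) :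
    lam k (fun y => h (A y)) x X = lam k h (A x) (A X) :=
  lam_invariance_general k h hh A x X
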